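/- (Substitution Lemma) Let α_1,…,α_t ∈ F_2^k be linearly independent vectors over F_2 satisfying f_{α_i}(n) = Ω(n^{c_1}) for each i ∈ [t], for some constant c_1 > 0. Suppose β_1, β_2 ∈ F_2^k satisfy β_1 − β_2 ∈ ⟨α_1,…,α_t⟩. If f_{β_1}(n) ~ c·n^{c_2} for some constants 0 < c_2 < c_1 and c > 0, then f_{β_2}(n) ~ c·n^{c_2}. -/

import Mathlib

open Filter

/-- A family `F` of subsets of `[n]` (modeled as `Fin n`) is `α`-intersecting modulo 2 for a
vector `α ∈ F_2^k` if for each `ℓ ∈ [k]`, any `ℓ` pairwise distinct members of `F`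
have an intersection of cardinality congruent to `a_ℓ` modulo 2.
Here `α ⟨ℓ-1,_⟩` denotes the coordinate `a_ℓ` (0-based indexing of a 1-based vector). -/
def IsIntersecting (k n : ℕ) (α : Fin k → ZMod 2) (F : Finset (Finset (Fin n))) : Prop :=
  ∀ (ℓ : Fin k) (S : Finset (Finset (Fin n))), S ⊆ F → S.card = ℓ.1 + 1 →
    ((S.inf id).card : ZMod 2) = α ℓ

/-- `fMax k n α` is the maximum size of an `α`-intersecting (mod 2) family of subsets of `[n]`. -/
noncomputable def fMax (k n : ℕ) (α : Fin k → ZMod 2) : ℕ :=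
  sSup {m | ∃ F : Finset (Finset (Fin n)), IsIntersecting k n α F ∧ F.card = m}

/-! Placing an `α`-intersecting family on `[n]` and a `β`-intersecting family on `[m]` side by side
on `[n + m]` and pairing their members gives an `(α + β)`-intersecting family, so
`min (f_α n) (f_β m) ≤ f_{α+β} (n + m)`. For `α = α_i` choose `m ≈ n ^ θ` with `c₂ / c₁ < θ < 1`:
then `m = o(n)` while `f_α m ≫ n ^ c₂`, so eventually the `α`-part is never the minimum. This gives
`f_β (n - m) ≤ f_{β+α} n` and, as `β + α + α = β`, `f_{β+α} n ≤ f_β (n + m)`; both bounds are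
`~ c n ^ c₂`. Shifts by the whole span follow by closing under sums. -/

open Topology

section Combinatorics

open Finset Function

variable {k n m : ℕ} {α β : Fin k → ZMod 2}

lemma IsIntersecting.mono {F G : Finset (Finset (Fin n))} (hF : IsIntersecting k n α F)
    (hGF : G ⊆ F) : IsIntersecting k n α G :=
  fun ℓ S hS => hF ℓ S (hS.trans hGF)

lemma isIntersecting_image_univ_iff {ι : Type*} [Fintype ι] [DecidableEq ι]
    {a : ι → Finset (Fin n)} (ha : Injective a) :
    IsIntersecting k n α (univ.image a) ↔
      ∀ (ℓ : Fin k) (I : Finset ι), I.card = ℓ.1 + 1 → ((I.inf a).card : ZMod 2) = α ℓ := by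
  refine ⟨fun h ℓ I hI => ?_, fun h ℓ S hS hSc => ?_⟩
  · simpa [inf_image] using
      h ℓ (I.image a) (image_subset_image (subset_univ I)) (by rwa [card_image_of_injective _ ha])
  · obtain ⟨I, -, rfl⟩ := subset_image_iff.mp hS
    rw [card_image_of_injective _ ha] at hSc
    simpa [inf_image] using h ℓ I hSc

lemma bddAbove_card_isIntersecting (k n : ℕ) (α : Fin k → ZMod 2) :
    BddAbove {m | ∃ F : Finset (Finset (Fin n)), IsIntersecting k n α F ∧ F.card = m} :=
  ⟨Fintype.card (Finset (Fin n)), by rintro _ ⟨F, -, rfl⟩; exact card_le_univ F⟩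

lemma exists_isIntersecting_card_eq_fMax (k n : ℕ) (α : Fin k → ZMod 2) :
    ∃ F : Finset (Finset (Fin n)), IsIntersecting k n α F ∧ F.card = fMax k n α := by
  have hempty : IsIntersecting k n α ∅ := fun ℓ S hS hSc => by
    simp [subset_empty.mp hS] at hSc
  refine Nat.sSup_mem ?_ (bddAbove_card_isIntersecting k n α)
  exact ⟨0, ∅, hempty, card_empty⟩

lemma card_le_fMax {F : Finset (Finset (Fin n))} (hF : IsIntersecting k n α F) :
    F.card ≤ fMax k n α :=
  le_csSup (bddAbove_card_isIntersecting k n α) ⟨F, hF, rfl⟩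

lemma exists_injective_isIntersecting_of_le_fMax {N : ℕ} (hN : N ≤ fMax k n α) :
    ∃ a : Fin N → Finset (Fin n), Injective a ∧ IsIntersecting k n α (univ.image a) := by
  classical
  obtain ⟨F, hF, hFc⟩ := exists_isIntersecting_card_eq_fMax k n α
  let a : Fin N ↪ Finset (Fin n) :=
    (Fin.castLEEmb (hFc ▸ hN)).trans (F.equivFin.symm.toEmbedding.trans (.subtype _))
  refine ⟨a, a.injective, hF.mono ?_⟩
  rintro _ hs
  obtain ⟨i, -, rfl⟩ := mem_image.mp hs
  simp [a]

def finAppend (s : Finset (Fin n)) (t : Finset (Fin m)) : Finset (Fin (n + m)) :=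
  (s.disjSum t).map finSumFinEquiv.toEmbedding

lemma card_finAppend (s : Finset (Fin n)) (t : Finset (Fin m)) :
    (finAppend s t).card = s.card + t.card := by
  rw [finAppend, card_map, card_disjSum]

lemma finAppend_inj {s s' : Finset (Fin n)} {t t' : Finset (Fin m)} :
    finAppend s t = finAppend s' t' ↔ s = s' ∧ t = t' := by
  rw [finAppend, finAppend, Finset.map_inj, disjSum_inj]

lemma inf_finAppend {ι : Type*} (I : Finset ι) (a : ι → Finset (Fin n)) (b : ι → Finset (Fin m)) :
    I.inf (fun i => finAppend (a i) (b i)) = finAppend (I.inf a) (I.inf b) := by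
  ext x
  obtain ⟨y, rfl⟩ := finSumFinEquiv.surjective x
  rcases y with y | y <;> simp [finAppend, mem_inf]

lemma min_fMax_le_fMax_add (n m : ℕ) (α β : Fin k → ZMod 2) :
    min (fMax k n α) (fMax k m β) ≤ fMax k (n + m) (α + β) := by
  classical
  obtain ⟨a, ha, hαa⟩ := exists_injective_isIntersecting_of_le_fMax (min_le_left _ (fMax k m β))
  obtain ⟨b, hb, hβb⟩ := exists_injective_isIntersecting_of_le_fMax (min_le_right (fMax k n α) _)
  have hab : Injective fun i => finAppend (a i) (b i) :=
    fun i j hij => ha (finAppend_inj.mp hij).1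
  have hH : IsIntersecting k (n + m) (α + β) (univ.image fun i => finAppend (a i) (b i)) := by
    rw [isIntersecting_image_univ_iff ha] at hαa
    rw [isIntersecting_image_univ_iff hb] at hβb
    rw [isIntersecting_image_univ_iff hab]
    intro ℓ I hI
    rw [inf_finAppend, card_finAppend, Nat.cast_add, hαa ℓ I hI, hβb ℓ I hI, Pi.add_apply]
  simpa [card_image_of_injective _ hab] using card_le_fMax hH

end Combinatorics

section Asymptotics

variable {c c1 c2 : ℝ}

lemma exists_intermediate_scale (hc1 : 0 < c1) (hc21 : c2 < c1) :
    ∃ m : ℕ → ℕ, Tendsto m atTop atTop ∧ Tendsto (fun n => (m n : ℝ) / n) atTop (𝓝 0) ∧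
      Tendsto (fun n => (m n : ℝ) ^ c1 / (n : ℝ) ^ c2) atTop atTop := by
  obtain ⟨θ, hθ, hθ1⟩ := exists_between (max_lt ((div_lt_one hc1).mpr hc21) one_pos)
  have hθ0 : 0 < θ := (le_max_right _ _).trans_lt hθ
  have hθc : c2 < θ * c1 := (div_lt_iff₀ hc1).mp ((le_max_left _ _).trans_lt hθ)
  have hpow : Tendsto (fun n : ℕ => (n : ℝ) ^ θ) atTop atTop :=
    (tendsto_rpow_atTop hθ0).comp tendsto_natCast_atTop_atTop
  refine ⟨fun n => ⌈(n : ℝ) ^ θ⌉₊, tendsto_nat_ceil_atTop.comp hpow, ?_, ?_⟩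
  · have hsmall : Tendsto (fun n : ℕ => (n : ℝ) ^ θ / n) atTop (𝓝 0) := by
      refine ((tendsto_rpow_neg_atTop (sub_pos.mpr hθ1)).comp tendsto_natCast_atTop_atTop).congr' ?_
      filter_upwards [eventually_gt_atTop 0] with n hn
      rw [Function.comp_apply, neg_sub, Real.rpow_sub_one (by positivity)]
    simpa using ((tendsto_nat_ceil_div_atTop.comp hpow).mul hsmall).congr' <|
      (eventually_gt_atTop 0).mono fun n hn => by
        simp only [Function.comp_apply]
        rw [div_mul_div_cancel₀ (by positivity)]
  · refine tendsto_atTop_mono' _ ?_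
      ((tendsto_rpow_atTop (sub_pos.mpr hθc)).comp tendsto_natCast_atTop_atTop)
    filter_upwards [eventually_gt_atTop 0] with n hn
    have hn' : (0 : ℝ) < n := Nat.cast_pos.mpr hn
    rw [Function.comp_apply, Real.rpow_sub hn', Real.rpow_mul hn'.le]
    gcongr
    exact Nat.le_ceil _

lemma tendsto_natCast_add_div_self {m : ℕ → ℕ}
    (hm : Tendsto (fun n => (m n : ℝ) / n) atTop (𝓝 0)) :
    Tendsto (fun n => ((n + m n : ℕ) : ℝ) / n) atTop (𝓝 1) := by
  simpa using (hm.const_add 1).congr' <| (eventually_gt_atTop 0).mono fun n hn => by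
    rw [add_div, div_self (by positivity)]

lemma tendsto_natCast_sub_div_self {m : ℕ → ℕ}
    (hm : Tendsto (fun n => (m n : ℝ) / n) atTop (𝓝 0)) :
    Tendsto (fun n => ((n - m n : ℕ) : ℝ) / n) atTop (𝓝 1) := by
  simpa using (hm.const_sub 1).congr' <| by
    filter_upwards [eventually_gt_atTop 0, hm.eventually (gt_mem_nhds one_pos)] with n hn hmn
    have hmn' : m n ≤ n := by
      exact_mod_cast ((div_lt_one (by positivity)).mp hmn).le
    rw [Nat.cast_sub hmn', sub_div, div_self (by positivity)]

lemma tendsto_comp_div_rpow {g : ℕ → ℝ} {s : ℕ → ℕ}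
    (hg : Tendsto (fun n => g n / (c * (n : ℝ) ^ c2)) atTop (𝓝 1))
    (hs : Tendsto (fun n => (s n : ℝ) / n) atTop (𝓝 1)) :
    Tendsto (fun n => g (s n) / (c * (n : ℝ) ^ c2)) atTop (𝓝 1) := by
  have hs_top : Tendsto s atTop atTop := by
    refine tendsto_natCast_atTop_iff.mp
      ((hs.pos_mul_atTop one_pos tendsto_natCast_atTop_atTop).congr' ?_)
    filter_upwards [eventually_gt_atTop 0] with n hn
    exact div_mul_cancel₀ _ (by positivity)
  have hpow := hs.rpow_const (p := c2) (Or.inl one_ne_zero)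
  rw [Real.one_rpow] at hpow
  simpa using ((hg.comp hs_top).mul hpow).congr' <| by
    filter_upwards [eventually_gt_atTop 0, hs_top.eventually_gt_atTop 0] with n hn hsn
    have : (s n : ℝ) ^ c2 ≠ 0 := by positivity
    simp only [Function.comp_apply]
    rw [Real.div_rpow (by positivity) (by positivity)]
    field_simp

lemma eventually_lt_of_tendsto_div {ι : Type*} {l : Filter ι} {a b v : ι → ℝ}
    (ha : Tendsto (fun i => a i / v i) l (𝓝 1)) (hb : Tendsto (fun i => b i / v i) l atTop)
    (hv : ∀ᶠ i in l, 0 < v i) : ∀ᶠ i in l, a i < b i := by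
  filter_upwards [ha.eventually (gt_mem_nhds one_lt_two), hb.eventually_gt_atTop 2, hv]
    with i hai hbi hvi
  rw [div_lt_iff₀ hvi] at hai
  rw [lt_div_iff₀ hvi] at hbi
  linarith

end Asymptotics

lemma tendsto_fMax_add_div_rpow {k : ℕ} {α β : Fin k → ZMod 2} {c c1 c2 : ℝ}
    (hc : 0 < c) (hc1 : 0 < c1) (hc21 : c2 < c1)
    (hα : ∃ ca : ℝ, 0 < ca ∧ ∀ᶠ n : ℕ in atTop, ca * (n : ℝ) ^ c1 ≤ fMax k n α)
    (hβ : Tendsto (fun n : ℕ => (fMax k n β : ℝ) / (c * (n : ℝ) ^ c2)) atTop (𝓝 1)) :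
    Tendsto (fun n : ℕ => (fMax k n (β + α) : ℝ) / (c * (n : ℝ) ^ c2)) atTop (𝓝 1) := by
  obtain ⟨ca, hca, hα⟩ := hα
  obtain ⟨m, hm_top, hm_small, hm_large⟩ := exists_intermediate_scale hc1 hc21
  have hv : ∀ᶠ n : ℕ in atTop, 0 < c * (n : ℝ) ^ c2 :=
    (eventually_gt_atTop 0).mono fun n hn => by positivity
  have hαm : Tendsto (fun n => (fMax k (m n) α : ℝ) / (c * (n : ℝ) ^ c2)) atTop atTop := by
    refine tendsto_atTop_mono' _ ?_ (hm_large.const_mul_atTop (div_pos hca hc))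
    filter_upwards [hm_top.eventually hα, eventually_gt_atTop 0] with n hn hn0
    have hvn : 0 < c * (n : ℝ) ^ c2 := by positivity
    rw [le_div_iff₀ hvn]
    calc ca / c * ((m n : ℝ) ^ c1 / (n : ℝ) ^ c2) * (c * (n : ℝ) ^ c2)
        = ca * (m n : ℝ) ^ c1 := by field_simp
      _ ≤ _ := hn
  have hsub := tendsto_comp_div_rpow hβ (tendsto_natCast_sub_div_self hm_small)
  have hadd := tendsto_comp_div_rpow hβ (tendsto_natCast_add_div_self hm_small)
  have hlower : ∀ᶠ n in atTop, fMax k (n - m n) β ≤ fMax k n (β + α) := by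
    filter_upwards [eventually_lt_of_tendsto_div hsub hαm hv,
      hm_small.eventually (gt_mem_nhds one_pos), eventually_gt_atTop 0] with n hlt hmn hn
    have hle : m n ≤ n := by exact_mod_cast ((div_lt_one (by positivity)).mp hmn).le
    have := min_fMax_le_fMax_add (n - m n) (m n) β α
    rwa [Nat.sub_add_cancel hle, min_eq_left (by exact_mod_cast hlt.le)] at this
  have hupper : ∀ᶠ n in atTop, fMax k n (β + α) ≤ fMax k (n + m n) β := by
    filter_upwards [eventually_lt_of_tendsto_div hadd hαm hv] with n hlt
    have := min_fMax_le_fMax_add n (m n) (β + α) α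
    rw [show β + α + α = β from funext fun i => CharTwo.add_cancel_right (β i) (α i)] at this
    exact (min_le_iff.mp this).resolve_right (by exact_mod_cast hlt.not_ge)
  refine tendsto_of_tendsto_of_tendsto_of_le_of_le' hsub hadd ?_ ?_
  · filter_upwards [hlower, hv] with n hn hvn
    exact div_le_div_of_nonneg_right (by exact_mod_cast hn) hvn.le
  · filter_upwards [hupper, hv] with n hn hvn
    exact div_le_div_of_nonneg_right (by exact_mod_cast hn) hvn.le

lemma forall_add_mem_span_zmod_two {M : Type*} [AddCommGroup M] [Module (ZMod 2) M]
    {P : M → Prop} {s : Set M} (hs : ∀ a ∈ s, ∀ x, P x → P (x + a)) {γ : M}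
    (hγ : γ ∈ Submodule.span (ZMod 2) s) : ∀ x, P x → P (x + γ) := by
  induction hγ using Submodule.span_induction with
  | mem a ha => exact hs a ha
  | zero => simp
  | add a b _ _ iha ihb => exact fun x hx => add_assoc x a b ▸ ihb _ (iha x hx)
  | smul r a _ iha =>
    obtain rfl | rfl : r = 0 ∨ r = 1 := by fin_cases r; exacts [Or.inl rfl, Or.inr rfl]
    · simp
    · simpa using iha

theorem stmt9_general (k t : ℕ) (A : Fin t → Fin k → ZMod 2)
    (c1 : ℝ) (hc1 : 0 < c1)
    (hbig : ∀ i : Fin t, ∃ ci : ℝ, 0 < ci ∧ ∀ᶠ n : ℕ in atTop,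
      ci * (n : ℝ) ^ c1 ≤ (fMax k n (A i) : ℝ))
    (β₁ β₂ : Fin k → ZMod 2) (hβ : β₁ - β₂ ∈ Submodule.span (ZMod 2) (Set.range A))
    (c c2 : ℝ) (hc : 0 < c) (hc21 : c2 < c1)
    (h1 : Tendsto (fun n : ℕ => (fMax k n β₁ : ℝ) / (c * (n : ℝ) ^ c2)) atTop (nhds 1)) :
    Tendsto (fun n : ℕ => (fMax k n β₂ : ℝ) / (c * (n : ℝ) ^ c2)) atTop (nhds 1) := by
  have hshift : ∀ a ∈ Set.range A, ∀ β : Fin k → ZMod 2,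
      Tendsto (fun n : ℕ => (fMax k n β : ℝ) / (c * (n : ℝ) ^ c2)) atTop (𝓝 1) →
      Tendsto (fun n : ℕ => (fMax k n (β + a) : ℝ) / (c * (n : ℝ) ^ c2)) atTop (𝓝 1) := by
    rintro _ ⟨i, rfl⟩ β hβ
    exact tendsto_fMax_add_div_rpow hc hc1 hc21 (hbig i) hβ
  have hβ' : β₂ - β₁ ∈ Submodule.span (ZMod 2) (Set.range A) := by
    simpa using neg_mem hβ
  simpa using forall_add_mem_span_zmod_two hshift hβ' β₁ h1

theorem stmt9 (k t : ℕ) (A : Fin t → Fin k → ZMod 2)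
    (hA : LinearIndependent (ZMod 2) A) (c1 : ℝ) (hc1 : 0 < c1)
    (hbig : ∀ i : Fin t, ∃ ci : ℝ, 0 < ci ∧ ∀ᶠ n : ℕ in atTop,
      ci * (n : ℝ) ^ c1 ≤ (fMax k n (A i) : ℝ))
    (β₁ β₂ : Fin k → ZMod 2) (hβ : β₁ - β₂ ∈ Submodule.span (ZMod 2) (Set.range A))
    (c c2 : ℝ) (hc : 0 < c) (hc2 : 0 < c2) (hc21 : c2 < c1)
    (h1 : Tendsto (fun n : ℕ => (fMax k n β₁ : ℝ) / (c * (n : ℝ) ^ c2)) atTop (nhds 1)) :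
    Tendsto (fun n : ℕ => (fMax k n β₂ : ℝ) / (c * (n : ℝ) ^ c2)) atTop (nhds 1) :=
  stmt9_general k t A c1 hc1 hbig β₁ β₂ hβ c c2 hc hc21 h1
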